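/- For every tiling instance T = (T,H,V,t0) and every n ∈ ℕ, there exists a proper tiling f of the 2^n × 2^n grid (f(0,0)=t0 and all horizontal constraints H and vertical constraints V satisfied) if and only if the ABEB formula β^n_T := α^n ∧ □^n( φ1 ∧ □φ1 ∧ □□φ1 ∧ ◇◇◇⊤ ∧ ψ0 ∧ ψ1 ∧ ψ2 ∧ ψ3 ) (with components defined in the context) is satisfiable in an increasing domain model. -/

import Mathlib

set_option maxHeartbeats 1000000

/-! ## Syntax of first-order modal logic (FOML)

Predicate symbols and variables are represented by natural numbers; an atom
`atom p args` applies the predicate symbol `p` to the list of variables `args`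
(the arity of `p` in this occurrence is the length of `args`). -/
inductive Formula : Type where
  | atom (p : ℕ) (args : List ℕ)
  | neg  (φ : Formula)
  | and  (φ ψ : Formula)
  | or   (φ ψ : Formula)
  | box  (φ : Formula)
  | dia  (φ : Formula)
  | ex   (x : ℕ) (φ : Formula)
  | all  (x : ℕ) (φ : Formula)
deriving DecidableEq

namespace Formula

def imp (φ ψ : Formula) : Formula := .or φ.neg ψ
def biimp (φ ψ : Formula) : Formula := .and (imp φ ψ) (imp ψ φ)
/-- a fixed tautology `⊤` -/
def top : Formula := .or (.atom 0 []) (.neg (.atom 0 []))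
/-- a fixed contradiction `⊥` -/
def bot : Formula := .and (.atom 0 []) (.neg (.atom 0 []))

end Formula

def bigAnd (l : List Formula) : Formula := l.foldr Formula.and Formula.top
def bigOr  (l : List Formula) : Formula := l.foldr Formula.or Formula.bot

/-! ## Semantics: Kripke structures with world-relative domains -/

structure Model where
  W : Type
  D : Type
  R : W → W → Prop
  dom : W → Set D
  ρ : W → ℕ → Set (List D)

/-- `M` is an increasing domain model: nonempty countable set of worlds, nonempty
countable domain, nonempty local domains that increase along the accessibility
relation, and interpretations of predicates at a world take values in the local
domain of that world. -/
def Model.Increasing (M : Model) : Prop :=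
  Nonempty M.W ∧ Nonempty M.D ∧ Countable M.W ∧ Countable M.D ∧
    (∀ w, (M.dom w).Nonempty) ∧
    (∀ w v, M.R w v → M.dom w ⊆ M.dom v) ∧
    (∀ w p l, l ∈ M.ρ w p → ∀ d ∈ l, d ∈ M.dom w)

def Model.sat (M : Model) : M.W → (ℕ → M.D) → Formula → Prop
  | w, σ, .atom p args => args.map σ ∈ M.ρ w p
  | w, σ, .neg φ => ¬ M.sat w σ φ
  | w, σ, .and φ ψ => M.sat w σ φ ∧ M.sat w σ ψ
  | w, σ, .or φ ψ => M.sat w σ φ ∨ M.sat w σ ψ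
  | w, σ, .box φ => ∀ v, M.R w v → M.sat v σ φ
  | w, σ, .dia φ => ∃ v, M.R w v ∧ M.sat v σ φ
  | w, σ, .ex x φ => ∃ d ∈ M.dom w, M.sat w (Function.update σ x d) φ
  | w, σ, .all x φ => ∀ d ∈ M.dom w, M.sat w (Function.update σ x d) φ

/-- the assignment `σ` is relevant at the world `w` -/
def Model.relevant (M : Model) (w : M.W) (σ : ℕ → M.D) : Prop := ∀ x, σ x ∈ M.dom w

/-- satisfiability over increasing domain models -/
def Satisfiable (φ : Formula) : Prop :=
  ∃ (M : Model), M.Increasing ∧ ∃ (w : M.W) (σ : ℕ → M.D), M.relevant w σ ∧ M.sat w σ φ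
/-! ## The ABEB formulas forcing exponentially many elements

Unary predicates `P_0, …, P_{n-1}` are the predicate symbols `0, …, n-1`;
variables: `x := 0` and `y_i := 1 + i`. -/

/-- the unary atom `P_i(x)` -/
def atomPU (i x : ℕ) : Formula := .atom i [x]

/-- `φ0 := ∃x □ ⋀_{0≤i<n} ¬P_i(x)` -/
def phiZero (n : ℕ) : Formula :=
  .ex 0 (.box (bigAnd ((List.range n).map fun i => .neg (atomPU i 0))))

/-- `φ1 := ∀x □ ⋀_{0≤i<n} ((P_i(x) → □P_i(x)) ∧ (¬P_i(x) → □¬P_i(x)))` -/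
def phiOne (n : ℕ) : Formula :=
  .all 0 (.box (bigAnd ((List.range n).map fun i =>
    .and ((atomPU i 0).imp (.box (atomPU i 0)))
      ((Formula.neg (atomPU i 0)).imp (.box (.neg (atomPU i 0)))))))

/-- `φ2 := ∀x □ ⋀_{0≤i<n} ( ¬P_i(x) → ∃y_i □( P_i(y_i) ∧ ⋀_{j≠i}(P_j(x) ↔ P_j(y_i)) ) )` -/
def phiTwo (n : ℕ) : Formula :=
  .all 0 (.box (bigAnd ((List.range n).map fun i =>
    (Formula.neg (atomPU i 0)).imp
      (.ex (1 + i) (.box (.and (atomPU i (1 + i))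
        (bigAnd (((List.range n).filter (fun j => decide (j ≠ i))).map fun j =>
          (atomPU j 0).biimp (atomPU j (1 + i))))))))))

/-- `□^{≤0}ψ := ⊤` and `□^{≤n}ψ := ψ ∧ □(□^{≤n-1}ψ)` -/
def boxLe : ℕ → Formula → Formula
  | 0, _ => .top
  | n + 1, ψ => .and ψ (.box (boxLe n ψ))

/-- `α^n := φ0 ∧ □^{≤n}(φ1 ∧ φ2 ∧ ◇⊤)` -/
def alphaN (n : ℕ) : Formula :=
  .and (phiZero n) (boxLe n (.and (phiOne n) (.and (phiTwo n) (.dia .top))))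

/-- `atDist M r j w` : there is a path of length `j` from `r` to `w` -/
def atDist (M : Model) (r : M.W) : ℕ → M.W → Prop
  | 0, w => w = r
  | j + 1, w => ∃ v, atDist M r j v ∧ M.R v w

/-- the number of `1`-bits of a binary string of length `n` -/
def onesCount {n : ℕ} (s : Fin n → Bool) : ℕ :=
  (Finset.univ.filter fun k => s k = true).card
/-! ## Exponential tiling and its ABEB encoding

A tiling instance `(T, H, V, t0)`; tiles are `Fin numTiles`. -/

structure TilingInstance where
  numTiles : ℕ
  t0 : Fin numTiles
  H : Finset (Fin numTiles × Fin numTiles)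
  V : Finset (Fin numTiles × Fin numTiles)

/-- a proper tiling of the `2^n × 2^n` grid -/
def ProperTiling2 (T : TilingInstance) (n : ℕ) (f : ℕ → ℕ → Fin T.numTiles) : Prop :=
  f 0 0 = T.t0 ∧
    (∀ i j, i + 1 < 2 ^ n → j < 2 ^ n → (f i j, f (i + 1) j) ∈ T.H) ∧
    (∀ i j, i < 2 ^ n → j + 1 < 2 ^ n → (f i j, f i (j + 1)) ∈ T.V)

/-- the binary atom `Q_t(x,y)` (grid point `(x,y)` carries tile `t`); the
predicate symbols `0,…,n-1` are the bit predicates `P_i`, and `n + t` is `Q_t` -/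
def atomQT (n : ℕ) {m : ℕ} (t : Fin m) (x y : ℕ) : Formula := .atom (n + (t : ℕ)) [x, y]

/-- `succ(x,y)` : the `n`-bit number encoded by `y` is the successor of the one
encoded by `x` -/
def succF (n x y : ℕ) : Formula :=
  bigOr ((List.range n).map fun i =>
    bigAnd ([Formula.neg (atomPU i x), atomPU i y]
      ++ ((List.range n).filter (fun j => decide (j < i))).map
          (fun j => Formula.and (atomPU j x) (.neg (atomPU j y)))
      ++ ((List.range n).filter (fun j => decide (i < j))).map
          (fun j => (atomPU j x).biimp (atomPU j y))))

/-- `ψ0 := ∀x□□□( ⋀_{i<n}¬P_i(x) → Q_{t0}(x,x) )` -/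
def psi0 (T : TilingInstance) (n : ℕ) : Formula :=
  .all 0 (.box (.box (.box
    ((bigAnd ((List.range n).map fun i => .neg (atomPU i 0))).imp
      (atomQT n T.t0 0 0)))))

/-- `ψ1 := ∀x□∀y□□( ⋁_t( Q_t(x,y) ∧ ⋀_{t'≠t}¬Q_{t'}(x,y) ) )` -/
def psi1 (T : TilingInstance) (n : ℕ) : Formula :=
  .all 0 (.box (.all 1 (.box (.box
    (bigOr ((List.finRange T.numTiles).map fun t =>
      .and (atomQT n t 0 1)
        (bigAnd (((List.finRange T.numTiles).filter (fun t' => decide (t' ≠ t))).map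
          fun t' => .neg (atomQT n t' 0 1)))))))))

/-- `ψ2 := ∀x□∀y□∀z□( succ(x,y) → ⋁_{(t,t')∈H}( Q_t(x,z) ∧ Q_{t'}(y,z) ) )` -/
noncomputable def psi2 (T : TilingInstance) (n : ℕ) : Formula :=
  .all 0 (.box (.all 1 (.box (.all 2 (.box
    ((succF n 0 1).imp
      (bigOr (T.H.toList.map fun p =>
        .and (atomQT n p.1 0 2) (atomQT n p.2 1 2)))))))))

/-- `ψ3 := ∀x□∀y□∀z□( succ(x,y) → ⋁_{(t,t')∈V}( Q_t(z,x) ∧ Q_{t'}(z,y) ) )` -/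
noncomputable def psi3 (T : TilingInstance) (n : ℕ) : Formula :=
  .all 0 (.box (.all 1 (.box (.all 2 (.box
    ((succF n 0 1).imp
      (bigOr (T.V.toList.map fun p =>
        .and (atomQT n p.1 2 0) (atomQT n p.2 2 1)))))))))

/-- `□^n φ` : `n` nested boxes -/
def boxIter : ℕ → Formula → Formula
  | 0, φ => φ
  | k + 1, φ => .box (boxIter k φ)

/-- `β^n_T := α^n ∧ □^n( φ1 ∧ □φ1 ∧ □□φ1 ∧ ◇◇◇⊤ ∧ ψ0 ∧ ψ1 ∧ ψ2 ∧ ψ3 )` -/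
noncomputable def betaNT (T : TilingInstance) (n : ℕ) : Formula :=
  .and (alphaN n)
    (boxIter n (bigAnd
      [ phiOne n, .box (phiOne n), .box (.box (phiOne n)),
        .dia (.dia (.dia .top)),
        psi0 T n, psi1 T n, psi2 T n, psi3 T n ]))


/-!
A proper tiling `f` gives a one-world model whose domain is the set `Fin (2 ^ n)` of grid
coordinates: `P_i` reads bit `i` and `Q_t(a, b)` holds iff `f a b = t`.

Conversely, take a path `w_0 → ⋯ → w_{n+3}` from a world satisfying `β^n_T`. By `φ1` the bits of
an element are frozen from the world after the one where it exists, and `φ0`, `φ2` (which sets one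
new bit) produce in `w_k` an element for every number below `2 ^ k`. So all `2 ^ n` coordinates
exist in `w_n`; `ψ1` assigns a unique tile to each pair of them in `w_{n+3}`, and `ψ0`, `ψ2`, `ψ3`
make this a proper tiling because `succ` holds exactly between consecutive numbers.
-/

section Semantics

variable {M : Model} {w : M.W} {σ : ℕ → M.D}

@[simp] lemma sat_neg {φ : Formula} : M.sat w σ (.neg φ) ↔ ¬ M.sat w σ φ := Iff.rfl
@[simp] lemma sat_and {φ ψ : Formula} : M.sat w σ (.and φ ψ) ↔ M.sat w σ φ ∧ M.sat w σ ψ := Iff.rfl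
@[simp] lemma sat_or {φ ψ : Formula} : M.sat w σ (.or φ ψ) ↔ M.sat w σ φ ∨ M.sat w σ ψ := Iff.rfl
@[simp] lemma sat_box {φ : Formula} : M.sat w σ (.box φ) ↔ ∀ v, M.R w v → M.sat v σ φ := Iff.rfl
@[simp] lemma sat_dia {φ : Formula} : M.sat w σ (.dia φ) ↔ ∃ v, M.R w v ∧ M.sat v σ φ := Iff.rfl
@[simp] lemma sat_ex {x : ℕ} {φ : Formula} :
    M.sat w σ (.ex x φ) ↔ ∃ d ∈ M.dom w, M.sat w (Function.update σ x d) φ := Iff.rfl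
@[simp] lemma sat_all {x : ℕ} {φ : Formula} :
    M.sat w σ (.all x φ) ↔ ∀ d ∈ M.dom w, M.sat w (Function.update σ x d) φ := Iff.rfl

@[simp] lemma sat_top : M.sat w σ .top := em _

@[simp] lemma sat_imp {φ ψ : Formula} : M.sat w σ (φ.imp ψ) ↔ (M.sat w σ φ → M.sat w σ ψ) :=
  imp_iff_not_or.symm

@[simp] lemma sat_biimp {φ ψ : Formula} :
    M.sat w σ (φ.biimp ψ) ↔ (M.sat w σ φ ↔ M.sat w σ ψ) := by
  simp [Formula.biimp, iff_iff_implies_and_implies]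

@[simp] lemma sat_bigAnd {l : List Formula} : M.sat w σ (bigAnd l) ↔ ∀ φ ∈ l, M.sat w σ φ := by
  induction l with
  | nil => simp [bigAnd]
  | cons φ l ih => simp_all [bigAnd]

@[simp] lemma sat_bigOr {l : List Formula} : M.sat w σ (bigOr l) ↔ ∃ φ ∈ l, M.sat w σ φ := by
  induction l with
  | nil => simp [bigOr, Formula.bot]
  | cons φ l ih => simp_all [bigOr]

@[simp] lemma sat_atomPU {i x : ℕ} : M.sat w σ (atomPU i x) ↔ [σ x] ∈ M.ρ w i := Iff.rfl

@[simp] lemma sat_atomQT {n m : ℕ} {t : Fin m} {x y : ℕ} :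
    M.sat w σ (atomQT n t x y) ↔ [σ x, σ y] ∈ M.ρ w (n + t) := Iff.rfl

end Semantics

def BitSucc (n : ℕ) (p q : ℕ → Prop) : Prop :=
  ∃ i < n, ¬ p i ∧ q i ∧ (∀ j < i, p j ∧ ¬ q j) ∧ ∀ j, i < j → j < n → (p j ↔ q j)

lemma bitSucc_congr {n : ℕ} {p q p' q' : ℕ → Prop} (hp : ∀ i < n, (p i ↔ p' i))
    (hq : ∀ i < n, (q i ↔ q' i)) : BitSucc n p q ↔ BitSucc n p' q' := by
  refine exists_congr fun i => and_congr_right fun hi => ?_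
  rw [hp i hi, hq i hi]
  refine and_congr_right' (and_congr_right' (and_congr ?_ ?_))
  · exact forall₂_congr fun j hj => by rw [hp j (hj.trans hi), hq j (hj.trans hi)]
  · exact forall_congr' fun j => imp_congr_right fun _ =>
      forall_congr' fun hj => by rw [hp j hj, hq j hj]

theorem Nat.exists_testBit_add_one (a : ℕ) : ∃ i, a.testBit i = false ∧ (a + 1).testBit i ∧
    (∀ j < i, a.testBit j ∧ (a + 1).testBit j = false) ∧
    ∀ j, i < j → (a + 1).testBit j = a.testBit j := by
  induction a using Nat.strong_induction_on with
  | _ a ih =>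
    rcases Nat.mod_two_eq_zero_or_one a with ha | ha
    · refine ⟨0, by simp [Nat.testBit_zero, ha], by simp [Nat.testBit_zero]; omega,
        fun j hj => absurd hj (Nat.not_lt_zero j), fun j hj => ?_⟩
      obtain ⟨j, rfl⟩ := Nat.exists_eq_add_of_lt hj
      rw [Nat.testBit_add_one, Nat.testBit_add_one, show (a + 1) / 2 = a / 2 by omega]
    · obtain ⟨i, h₁, h₂, h₃, h₄⟩ := ih (a / 2) (by omega)
      have hdiv : (a + 1) / 2 = a / 2 + 1 := by omega
      refine ⟨i + 1, ?_, ?_, fun j hj => ?_, fun j hj => ?_⟩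
      · rwa [Nat.testBit_add_one]
      · rwa [Nat.testBit_add_one, hdiv]
      · rcases j with _ | j
        · simp [Nat.testBit_zero, ha]; omega
        · rw [Nat.testBit_add_one, Nat.testBit_add_one, hdiv]
          exact h₃ j (by omega)
      · obtain ⟨j, rfl⟩ : ∃ k, j = k + 1 := ⟨j - 1, by omega⟩
        rw [Nat.testBit_add_one, Nat.testBit_add_one, hdiv]
        exact h₄ j (by omega)

theorem bitSucc_testBit_iff {n a b : ℕ} (ha : a < 2 ^ n) (hb : b < 2 ^ n) :
    BitSucc n (fun i => a.testBit i) (fun i => b.testBit i) ↔ b = a + 1 := by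
  obtain ⟨k, g₁, g₂, g₃, g₄⟩ := Nat.exists_testBit_add_one a
  have high : ∀ {c j}, c < 2 ^ n → n ≤ j → c.testBit j = false := fun hc hj =>
    Nat.testBit_lt_two_pow (hc.trans_le (Nat.pow_le_pow_right two_pos hj))
  constructor
  · rintro ⟨i, hi, h₁, h₂, h₃, h₄⟩
    beta_reduce at h₁ h₃ h₄
    have hik : i = k := by
      by_contra hne
      rcases Nat.lt_or_gt_of_ne hne with h | h
      · exact absurd (g₃ i h).1 h₁
      · exact absurd (h₃ k h).1 (by simp [g₁])
    subst hik
    apply Nat.eq_of_testBit_eq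
    intro j
    rcases lt_trichotomy j i with h | rfl | h
    · simp [(h₃ j h).2, (g₃ j h).2]
    · simp [h₂, g₂]
    · rw [g₄ j h]
      by_cases hj : j < n
      · simpa using (h₄ j h hj).symm
      · rw [high hb (by omega), high ha (by omega)]
  · rintro rfl
    have hk : k < n := by
      by_contra hk
      simp [high hb (not_lt.mp hk)] at g₂
    exact ⟨k, hk, by simp [g₁], g₂, fun j hj => by simp [g₃ j hj],
      fun j hj _ => by simp [g₄ j hj]⟩



section Formulas

variable {M : Model} {w : M.W} {σ : ℕ → M.D} {n : ℕ} {T : TilingInstance}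

lemma sat_phiZero : M.sat w σ (phiZero n) ↔
    ∃ d ∈ M.dom w, ∀ v, M.R w v → ∀ i < n, [d] ∉ M.ρ v i := by
  simp [phiZero]

lemma sat_phiOne : M.sat w σ (phiOne n) ↔
    ∀ d ∈ M.dom w, ∀ v, M.R w v → ∀ i < n, ∀ u, M.R v u → ([d] ∈ M.ρ v i ↔ [d] ∈ M.ρ u i) := by
  simp only [phiOne, sat_all, sat_box, sat_bigAnd, List.forall_mem_map, List.mem_range, sat_and,
    sat_imp, sat_neg, sat_atomPU, Function.update_self]
  refine forall₂_congr fun d _ => forall₂_congr fun v _ => forall₂_congr fun i _ => ?_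
  by_cases h : [d] ∈ M.ρ v i <;> simp [h]

lemma sat_phiTwo : M.sat w σ (phiTwo n) ↔
    ∀ d ∈ M.dom w, ∀ v, M.R w v → ∀ i < n, [d] ∉ M.ρ v i →
      ∃ e ∈ M.dom v, ∀ u, M.R v u →
        [e] ∈ M.ρ u i ∧ ∀ j < n, j ≠ i → ([d] ∈ M.ρ u j ↔ [e] ∈ M.ρ u j) := by
  simp only [phiTwo, sat_all, sat_ex, sat_box, sat_and, sat_imp, sat_neg, sat_bigAnd,
    List.forall_mem_map, List.mem_range, List.mem_filter]
  simp [add_comm 1]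

lemma sat_succF {x y : ℕ} : M.sat w σ (succF n x y) ↔
    BitSucc n (fun i => [σ x] ∈ M.ρ w i) (fun i => [σ y] ∈ M.ρ w i) := by
  simp only [succF, sat_bigOr, List.mem_map, exists_exists_and_eq_and]
  simp only [sat_bigAnd, List.forall_mem_append, List.forall_mem_map, List.mem_filter,
    List.mem_range, List.mem_cons, List.not_mem_nil, or_false, forall_eq_or_imp, forall_eq,
    decide_eq_true_eq, and_imp, sat_neg, sat_and, sat_biimp, sat_atomPU, BitSucc]
  refine exists_congr fun i => and_congr_right fun hi => ?_
  constructor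
  · rintro ⟨⟨⟨h₁, h₂⟩, h₃⟩, h₄⟩
    exact ⟨h₁, h₂, fun j hj => h₃ j (hj.trans hi) hj, fun j hij hj => h₄ j hj hij⟩
  · rintro ⟨h₁, h₂, h₃, h₄⟩
    exact ⟨⟨⟨h₁, h₂⟩, fun j _ hj => h₃ j hj⟩, fun j hj hij => h₄ j hij hj⟩

lemma sat_psi0 : M.sat w σ (psi0 T n) ↔
    ∀ d ∈ M.dom w, ∀ v₁, M.R w v₁ → ∀ v₂, M.R v₁ v₂ → ∀ v₃, M.R v₂ v₃ →
      (∀ i < n, [d] ∉ M.ρ v₃ i) → [d, d] ∈ M.ρ v₃ (n + T.t0) := by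
  simp [psi0]

lemma sat_psi1 : M.sat w σ (psi1 T n) ↔
    ∀ a ∈ M.dom w, ∀ v₁, M.R w v₁ → ∀ b ∈ M.dom v₁, ∀ v₂, M.R v₁ v₂ → ∀ v₃, M.R v₂ v₃ →
      ∃ t : Fin T.numTiles, [a, b] ∈ M.ρ v₃ (n + t) ∧
        ∀ t' ≠ t, [a, b] ∉ M.ρ v₃ (n + t') := by
  simp [psi1]

lemma sat_psi2 : M.sat w σ (psi2 T n) ↔
    ∀ a ∈ M.dom w, ∀ v₁, M.R w v₁ → ∀ b ∈ M.dom v₁, ∀ v₂, M.R v₁ v₂ →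
      ∀ c ∈ M.dom v₂, ∀ v₃, M.R v₂ v₃ →
      BitSucc n (fun i => [a] ∈ M.ρ v₃ i) (fun i => [b] ∈ M.ρ v₃ i) →
      ∃ p ∈ T.H, [a, c] ∈ M.ρ v₃ (n + p.1) ∧ [b, c] ∈ M.ρ v₃ (n + p.2) := by
  simp [psi2, sat_succF]

lemma sat_psi3 : M.sat w σ (psi3 T n) ↔
    ∀ a ∈ M.dom w, ∀ v₁, M.R w v₁ → ∀ b ∈ M.dom v₁, ∀ v₂, M.R v₁ v₂ →
      ∀ c ∈ M.dom v₂, ∀ v₃, M.R v₂ v₃ →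
      BitSucc n (fun i => [a] ∈ M.ρ v₃ i) (fun i => [b] ∈ M.ρ v₃ i) →
      ∃ p ∈ T.V, [c, a] ∈ M.ρ v₃ (n + p.1) ∧ [c, b] ∈ M.ρ v₃ (n + p.2) := by
  simp [psi3, sat_succF]

end Formulas

lemma sat_boxIter_of_forall {M : Model} {φ : Formula} (h : ∀ w σ, M.sat w σ φ) :
    ∀ k w σ, M.sat w σ (boxIter k φ)
  | 0, w, σ => h w σ
  | k + 1, _, σ => fun v _ => sat_boxIter_of_forall h k v σ

lemma sat_boxLe_of_forall {M : Model} {ψ : Formula} (h : ∀ w σ, M.sat w σ ψ) :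
    ∀ k w σ, M.sat w σ (boxLe k ψ)
  | 0, _, _ => sat_top
  | k + 1, w, σ => ⟨h w σ, fun v _ => sat_boxLe_of_forall h k v σ⟩

def gridAtoms (n : ℕ) {m : ℕ} (f : ℕ → ℕ → Fin m) : ℕ → List (Fin (2 ^ n)) → Prop
  | p, [d] => (d : ℕ).testBit p
  | p, [a, b] => n + (f a b : ℕ) = p
  | _, _ => False

abbrev gridModel (n : ℕ) {m : ℕ} (f : ℕ → ℕ → Fin m) : Model where
  W := Unit
  D := Fin (2 ^ n)
  R _ _ := True
  dom _ := Set.univ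
  ρ _ p := {l | gridAtoms n f p l}

section GridModel

variable {n : ℕ} {T : TilingInstance} {f : ℕ → ℕ → Fin T.numTiles} {w : Unit}

lemma gridModel_increasing : (gridModel n f).Increasing :=
  ⟨inferInstanceAs (Nonempty Unit), ⟨⟨0, Nat.two_pow_pos n⟩⟩, inferInstanceAs (Countable Unit),
    inferInstanceAs (Countable (Fin (2 ^ n))), fun _ => ⟨⟨0, Nat.two_pow_pos n⟩, trivial⟩,
    fun _ _ _ => subset_rfl, fun _ _ _ _ _ _ => trivial⟩

@[simp] lemma gridAtoms_singleton {d : Fin (2 ^ n)} {p : ℕ} :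
    gridAtoms n f p [d] ↔ (d : ℕ).testBit p := Iff.rfl

@[simp] lemma gridAtoms_pair {a b : Fin (2 ^ n)} {t : Fin T.numTiles} :
    gridAtoms n f (n + t) [a, b] ↔ f a b = t :=
  Nat.add_left_cancel_iff.trans Fin.val_inj

variable {σ : ℕ → Fin (2 ^ n)}

lemma gridModel_sat_phiZero : (gridModel n f).sat w σ (phiZero n) :=
  sat_phiZero.mpr ⟨⟨0, Nat.two_pow_pos n⟩, trivial, by simp⟩

lemma gridModel_sat_phiOne : (gridModel n f).sat w σ (phiOne n) :=
  sat_phiOne.mpr fun _ _ _ _ _ _ _ _ => Iff.rfl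

lemma gridModel_sat_phiTwo : (gridModel n f).sat w σ (phiTwo n) := by
  refine sat_phiTwo.mpr fun d _ v _ i hi _ => ?_
  refine ⟨⟨d ||| 2 ^ i, Nat.or_lt_two_pow d.2 (Nat.pow_lt_pow_right one_lt_two hi)⟩, trivial,
    fun _ _ => ?_⟩
  simp only [Set.mem_ofPred_eq, gridAtoms_singleton, Nat.testBit_or, Nat.testBit_two_pow_self,
    Bool.or_true, Nat.testBit_two_pow, Bool.or_eq_true, decide_eq_true_eq, iff_self_or, true_and]
  exact fun j _ hji hij => (hji hij.symm).elim

lemma gridModel_sat_psi0 (h : f 0 0 = T.t0) : (gridModel n f).sat w σ (psi0 T n) := by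
  refine sat_psi0.mpr fun d _ _ _ _ _ _ _ hd => ?_
  have : (d : ℕ) = 0 := Nat.eq_of_testBit_eq fun i => by
    by_cases hi : i < n
    · simpa using hd i hi
    · rw [Nat.zero_testBit]
      exact Nat.testBit_lt_two_pow (d.2.trans_le (Nat.pow_le_pow_right two_pos (not_lt.mp hi)))
  simpa [this] using h

lemma gridModel_sat_psi1 : (gridModel n f).sat w σ (psi1 T n) :=
  sat_psi1.mpr fun a _ _ _ b _ _ _ _ _ => ⟨f a b, by simp [eq_comm]⟩

variable (hf : ProperTiling2 T n f)
include hf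

lemma gridModel_sat_psi2 : (gridModel n f).sat w σ (psi2 T n) := by
  refine sat_psi2.mpr fun a _ _ _ b _ _ _ c _ _ _ hab => ?_
  have hb : (b : ℕ) = a + 1 := (bitSucc_testBit_iff a.2 b.2).mp hab
  exact ⟨(f a c, f b c), by simpa [hb] using hf.2.1 a c (hb ▸ b.2) c.2, by simp, by simp⟩

lemma gridModel_sat_psi3 : (gridModel n f).sat w σ (psi3 T n) := by
  refine sat_psi3.mpr fun a _ _ _ b _ _ _ c _ _ _ hab => ?_
  have hb : (b : ℕ) = a + 1 := (bitSucc_testBit_iff a.2 b.2).mp hab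
  exact ⟨(f c a, f c b), by simpa [hb] using hf.2.2 c a c.2 (hb ▸ b.2), by simp, by simp⟩

theorem satisfiable_betaNT_of_properTiling : Satisfiable (betaNT T n) := by
  refine ⟨gridModel n f, gridModel_increasing, (), fun _ => ⟨0, Nat.two_pow_pos n⟩,
    fun _ => trivial, ?_, ?_⟩
  · refine ⟨gridModel_sat_phiZero, sat_boxLe_of_forall (fun _ _ => ?_) n _ _⟩
    exact ⟨gridModel_sat_phiOne, gridModel_sat_phiTwo, (), trivial, sat_top⟩
  · refine sat_boxIter_of_forall (fun _ _ => sat_bigAnd.mpr ?_) n _ _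
    simp only [List.mem_cons, List.not_mem_nil, or_false]
    rintro φ (rfl | rfl | rfl | rfl | rfl | rfl | rfl | rfl)
    · exact gridModel_sat_phiOne
    · exact fun _ _ => gridModel_sat_phiOne
    · exact fun _ _ _ _ => gridModel_sat_phiOne
    · exact ⟨(), trivial, (), trivial, (), trivial, sat_top⟩
    · exact gridModel_sat_psi0 hf.1
    · exact gridModel_sat_psi1
    · exact gridModel_sat_psi2 hf
    · exact gridModel_sat_psi3 hf

end GridModel

def Model.IsPath (M : Model) (ws : ℕ → M.W) (k : ℕ) : Prop :=
  ∀ j < k, M.R (ws j) (ws (j + 1))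

def Model.Encodes (M : Model) (w : M.W) (n : ℕ) (d : M.D) (x : ℕ) : Prop :=
  ∀ i < n, ([d] ∈ M.ρ w i ↔ x.testBit i)

lemma Model.Encodes.bitSucc {M : Model} {w : M.W} {n a : ℕ} {d e : M.D}
    (hd : M.Encodes w n d a) (he : M.Encodes w n e (a + 1)) (ha : a + 1 < 2 ^ n) :
    BitSucc n (fun i => [d] ∈ M.ρ w i) (fun i => [e] ∈ M.ρ w i) :=
  (bitSucc_congr hd he).mpr ((bitSucc_testBit_iff (by omega) ha).mpr rfl)

lemma exists_path_of_sat_boxLe {M : Model} {σ : ℕ → M.D} {ψ φ : Formula} :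
    ∀ k w, M.sat w σ (boxLe k ψ) → M.sat w σ (boxIter k φ) → (∀ v, M.sat v σ ψ → ∃ u, M.R v u) →
      ∃ ws : ℕ → M.W, ws 0 = w ∧ M.IsPath ws k ∧ (∀ j < k, M.sat (ws j) σ ψ) ∧ M.sat (ws k) σ φ
  | 0, w, _, hφ, _ => ⟨fun _ => w, rfl, fun _ h => absurd h (Nat.not_lt_zero _),
      fun _ h => absurd h (Nat.not_lt_zero _), hφ⟩
  | k + 1, w, hle, hφ, hψ => by
    obtain ⟨hψw, hbox⟩ := hle
    obtain ⟨v, hv⟩ := hψ w hψw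
    obtain ⟨ws, rfl, hpath, hsat, hend⟩ := exists_path_of_sat_boxLe k v (hbox v hv) (hφ v hv) hψ
    refine ⟨fun | 0 => w | j + 1 => ws j, rfl, ?_, ?_, hend⟩
    · rintro (_ | j) hj
      · exact hv
      · exact hpath j (by omega)
    · rintro (_ | j) hj
      · exact hψw
      · exact hsat j (by omega)

/-- The grid lives at `ws n`; `ws (n + 1)`, `ws (n + 2)`, `ws (n + 3)` are the worlds reached by
the three boxes of `ψ0, …, ψ3`. -/
structure BetaPath (M : Model) (T : TilingInstance) (n : ℕ) (σ : ℕ → M.D) (ws : ℕ → M.W) :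
    Prop where
  path : M.IsPath ws (n + 3)
  dom_mono : ∀ w v, M.R w v → M.dom w ⊆ M.dom v
  origin : M.sat (ws 0) σ (phiZero n)
  persist : ∀ k ≤ n + 1, M.sat (ws k) σ (phiOne n)
  flip : ∀ k < n, M.sat (ws k) σ (phiTwo n)
  initial : M.sat (ws n) σ (psi0 T n)
  tiled : M.sat (ws n) σ (psi1 T n)
  horizontal : M.sat (ws n) σ (psi2 T n)
  vertical : M.sat (ws n) σ (psi3 T n)

lemma exists_betaPath {M : Model} {T : TilingInstance} {n : ℕ} {w : M.W} {σ : ℕ → M.D}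
    (hM : M.Increasing) (h : M.sat w σ (betaNT T n)) : ∃ ws, BetaPath M T n σ ws := by
  obtain ⟨⟨hφ₀, hα⟩, hβ⟩ := h
  obtain ⟨ws, rfl, hpath, hψ, hend⟩ :=
    exists_path_of_sat_boxLe n w hα hβ fun _ h => (sat_dia.mp h.2.2).imp fun _ => And.left
  have hβ := sat_bigAnd.mp hend
  obtain ⟨v₁, h₁, v₂, h₂, v₃, h₃, -⟩ := hβ (.dia (.dia (.dia .top))) (by simp)
  let ws' : ℕ → M.W := fun j =>
    if j ≤ n then ws j else if j = n + 1 then v₁ else if j = n + 2 then v₂ else v₃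
  have e : ∀ j ≤ n, ws' j = ws j := fun j hj => if_pos hj
  have e₁ : ws' (n + 1) = v₁ := by simp [ws']
  have e₂ : ws' (n + 2) = v₂ := by simp [ws']
  have e₃ : ws' (n + 3) = v₃ := by simp [ws']
  refine ⟨ws', ⟨fun j hj => ?_, hM.2.2.2.2.2.1, ?_, fun k hk => ?_, fun k hk => ?_, ?_, ?_, ?_, ?_⟩⟩
  · obtain hj | rfl | rfl | rfl : j < n ∨ j = n ∨ j = n + 1 ∨ j = n + 2 := by omega
    · rw [e j hj.le, e (j + 1) hj]
      exact hpath j hj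
    · rwa [e j le_rfl, e₁]
    · rwa [e₁, e₂]
    · rwa [e₂, e₃]
  · rw [e 0 (Nat.zero_le n)]
    exact hφ₀
  · obtain hk | rfl | rfl : k < n ∨ k = n ∨ k = n + 1 := by omega
    · rw [e k hk.le]
      exact (hψ k hk).1
    · rw [e k le_rfl]
      exact hβ _ (by simp)
    · rw [e₁]
      exact hβ (.box (phiOne n)) (by simp) v₁ h₁
  · rw [e k hk.le]
    exact (hψ k hk).2.1
  all_goals rw [e n le_rfl]; exact hβ _ (by simp)

namespace BetaPath

variable {M : Model} {T : TilingInstance} {n : ℕ} {σ : ℕ → M.D} {ws : ℕ → M.W}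
  (h : BetaPath M T n σ ws)
include h

lemma dom_subset {a b : ℕ} (hab : a ≤ b) (hb : b ≤ n + 3) : M.dom (ws a) ⊆ M.dom (ws b) := by
  induction b, hab using Nat.le_induction with
  | base => exact subset_rfl
  | succ b _ ih => exact (ih (by omega)).trans (h.dom_mono _ _ (h.path b (by omega)))

lemma mem_iff_mem_succ {d : M.D} {k i : ℕ} (hd : d ∈ M.dom (ws k)) (hk : k ≤ n + 1) (hi : i < n) :
    [d] ∈ M.ρ (ws (k + 1)) i ↔ [d] ∈ M.ρ (ws (k + 2)) i :=
  sat_phiOne.mp (h.persist k hk) d hd _ (h.path k (by omega)) i hi _ (h.path (k + 1) (by omega))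

lemma mem_iff_mem_last {d : M.D} {m a i : ℕ} (hd : d ∈ M.dom (ws m)) (hma : m < a)
    (ha : a ≤ n + 3) (hi : i < n) : [d] ∈ M.ρ (ws a) i ↔ [d] ∈ M.ρ (ws (n + 3)) i := by
  obtain ⟨s, hs⟩ := Nat.exists_eq_add_of_le ha
  induction s generalizing a with
  | zero => rw [hs, Nat.add_zero]
  | succ s ih =>
    obtain ⟨c, rfl⟩ := Nat.exists_eq_add_of_lt hma
    rw [← ih (a := m + c + 2) (by omega) (by omega) (by omega)]
    exact h.mem_iff_mem_succ (h.dom_subset (by omega) (by omega) hd) (by omega) hi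

lemma exists_encodes_or_two_pow {d : M.D} {k y : ℕ} (hk : k < n) (hd : d ∈ M.dom (ws k))
    (hy : M.Encodes (ws (n + 3)) n d y) (hyk : y.testBit k = false) :
    ∃ e ∈ M.dom (ws (k + 1)), M.Encodes (ws (n + 3)) n e (y ||| 2 ^ k) := by
  have hdk : [d] ∉ M.ρ (ws (k + 1)) k := by
    rw [h.mem_iff_mem_last hd (by omega) (by omega) hk, hy k hk, hyk]
    exact Bool.false_ne_true
  obtain ⟨e, he, hu⟩ := sat_phiTwo.mp (h.flip k hk) d hd _ (h.path k (by omega)) k hk hdk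
  obtain ⟨hek, hej⟩ := hu _ (h.path (k + 1) (by omega))
  refine ⟨e, he, fun i hi => ?_⟩
  rw [← h.mem_iff_mem_last he (Nat.lt_succ_self _) (by omega) hi, Nat.testBit_or,
    Nat.testBit_two_pow]
  rcases eq_or_ne i k with rfl | hik
  · simpa using hek
  · rw [← hej i hi hik, h.mem_iff_mem_last hd (by omega) (by omega) hi, hy i hi]
    simp [hik.symm]

lemma exists_encodes : ∀ k ≤ n, ∀ x < 2 ^ k, ∃ d ∈ M.dom (ws k), M.Encodes (ws (n + 3)) n d x
  | 0, _, x, hx => by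
    obtain rfl : x = 0 := by simpa using hx
    obtain ⟨d, hd, hbits⟩ := sat_phiZero.mp h.origin
    refine ⟨d, hd, fun i hi => ?_⟩
    rw [← h.mem_iff_mem_last hd zero_lt_one (by omega) hi]
    simpa using hbits _ (h.path 0 (by omega)) i hi
  | k + 1, hk, x, hx => by
    rcases lt_or_ge x (2 ^ k) with hx' | hx'
    · obtain ⟨d, hd, hdx⟩ := exists_encodes k (by omega) x hx'
      exact ⟨d, h.dom_subset (Nat.le_succ k) (by omega) hd, hdx⟩
    · obtain ⟨y, rfl⟩ := Nat.exists_eq_add_of_le' hx'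
      have hy : y < 2 ^ k := by rw [pow_succ] at hx; omega
      obtain ⟨d, hd, hdy⟩ := exists_encodes k (by omega) y hy
      rw [← Nat.or_two_pow_eq_add_of_lt hy]
      exact h.exists_encodes_or_two_pow (by omega) hd hdy (Nat.testBit_lt_two_pow hy)

theorem exists_properTiling : ∃ f : ℕ → ℕ → Fin T.numTiles, ProperTiling2 T n f := by
  have R₀ := h.path n (by omega)
  have R₁ := h.path (n + 1) (by omega)
  have R₂ := h.path (n + 2) (by omega)
  have hcode : ∀ x, ∃ d ∈ M.dom (ws n), M.Encodes (ws (n + 3)) n d x := fun x => by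
    obtain ⟨d, hd, hdx⟩ := h.exists_encodes n le_rfl (x % 2 ^ n) (Nat.mod_lt _ (Nat.two_pow_pos n))
    exact ⟨d, hd, fun i hi => by simpa [hi] using hdx i hi⟩
  choose d hd hdx using hcode
  have hd₁ x : d x ∈ M.dom (ws (n + 1)) := h.dom_subset (by omega) (by omega) (hd x)
  have hd₂ x : d x ∈ M.dom (ws (n + 2)) := h.dom_subset (by omega) (by omega) (hd x)
  choose f hf hf_unique using fun x y =>
    sat_psi1.mp h.tiled (d x) (hd x) _ R₀ (d y) (hd₁ y) _ R₁ _ R₂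
  have hf_eq {x y : ℕ} {t : Fin T.numTiles} (ht : [d x, d y] ∈ M.ρ (ws (n + 3)) (n + t)) :
      f x y = t := by_contra fun hne => hf_unique x y t (Ne.symm hne) ht
  refine ⟨f, hf_eq ?_, fun x y hx _ => ?_, fun x y _ hy => ?_⟩
  · refine sat_psi0.mp h.initial (d 0) (hd 0) _ R₀ _ R₁ _ R₂ fun i hi hmem => ?_
    simpa using (hdx 0 i hi).mp hmem
  · obtain ⟨p, hp, h₁, h₂⟩ := sat_psi2.mp h.horizontal (d x) (hd x) _ R₀ (d (x + 1)) (hd₁ _) _ R₁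
      (d y) (hd₂ y) _ R₂ ((hdx x).bitSucc (hdx (x + 1)) hx)
    rwa [hf_eq h₁, hf_eq h₂]
  · obtain ⟨p, hp, h₁, h₂⟩ := sat_psi3.mp h.vertical (d y) (hd y) _ R₀ (d (y + 1)) (hd₁ _) _ R₁
      (d x) (hd₂ x) _ R₂ ((hdx y).bitSucc (hdx (y + 1)) hy)
    rwa [hf_eq h₁, hf_eq h₂]

end BetaPath

/-- For every tiling instance `T` and every `n ∈ ℕ`, there is
a proper tiling of the `2^n × 2^n` grid iff the `ABEB` formula `β^n_T` is
satisfiable in an increasing domain model. -/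
theorem exponential_tiling_iff_betaNT_satisfiable (T : TilingInstance) (n : ℕ) :
    (∃ f : ℕ → ℕ → Fin T.numTiles, ProperTiling2 T n f) ↔ Satisfiable (betaNT T n) := by
  refine ⟨fun ⟨f, hf⟩ => satisfiable_betaNT_of_properTiling hf, ?_⟩
  rintro ⟨M, hM, w, σ, -, hsat⟩
  obtain ⟨ws, h⟩ := exists_betaPath hM hsat
  exact h.exists_properTiling
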